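/- arXiv:2105.10166 — 5 statements merged into one kernel-verified Lean document; each statement's English description precedes it below -/
import Mathlib

section
/- Define δ_m := inf_{y>0} {1 - y^{-m} ∫₀^y x^m b(x,y) dx} for m > 1, where b is a nonnegative measurable function on {0 < x < y} with ∫₀^y x b(x,y) dx = y for all y > 0 and δ₂ > 0. Then the map m ↦ δ_m is non-decreasing on (1, ∞), and δ_m ∈ (0, 1] for all m > 1; in particular 1 - δ_m ≤ (1-δ₂)^{m-1} for m ∈ (1,2) and 1 - δ_m ≤ 1 - δ₂ for m ≥ 2. -/
/-!
Write `M_m(y) = ∫₀^y x ^ m b(x, y) dx`. For `0 < x < y` we have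
`x ^ m' ≤ y ^ (m' - m) * x ^ m`, so the normalized moments `M_m(y) / y ^ m` decrease in `m`,
and mass conservation makes the first one equal to `1`. Hence `δ_m ∈ [0, 1]` and `m ↦ δ_m` is
non-decreasing. For `1 < m < 2`, Hölder's inequality with exponents `1 / (2 - m)` and
`1 / (m - 1)` interpolates `M_m ≤ M_1 ^ (2 - m) * M_2 ^ (m - 1)`, which after normalization
reads `1 - δ_m ≤ (1 - δ_2) ^ (m - 1) < 1`.
-/

open Real MeasureTheory Set

section Interpolation

variable {α : Type*} [MeasurableSpace α] {μ : Measure α}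

theorem MeasureTheory.Integrable.memLp_rpow_of_nonneg {f : α → ℝ} (hf : Integrable f μ)
    (hf0 : 0 ≤ᵐ[μ] f) {θ : ℝ} (hθ : 0 < θ) :
    MemLp (fun a => f a ^ θ) (ENNReal.ofReal (1 / θ)) μ := by
  have h := (memLp_one_iff_integrable.mpr hf).norm_rpow_div (ENNReal.ofReal θ)
  rw [ENNReal.toReal_ofReal hθ.le, one_div, ← ENNReal.ofReal_inv_of_pos hθ] at h
  rw [one_div]
  refine h.ae_eq ?_
  filter_upwards [hf0] with a ha
  rw [Real.norm_of_nonneg ha]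

theorem MeasureTheory.integral_rpow_mul_rpow_le {f g : α → ℝ} (hf : Integrable f μ)
    (hg : Integrable g μ) (hf0 : 0 ≤ᵐ[μ] f) (hg0 : 0 ≤ᵐ[μ] g) {θ : ℝ} (hθ0 : 0 < θ)
    (hθ1 : θ < 1) :
    ∫ a, f a ^ (1 - θ) * g a ^ θ ∂μ ≤ (∫ a, f a ∂μ) ^ (1 - θ) * (∫ a, g a ∂μ) ^ θ := by
  have hθ' : 0 < 1 - θ := sub_pos.mpr hθ1
  have hpq := Real.holderConjugate_one_div hθ' hθ0 (sub_add_cancel 1 θ)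
  have holder := integral_mul_le_Lp_mul_Lq_of_nonneg hpq
    (hf0.mono fun a ha => rpow_nonneg ha _) (hg0.mono fun a ha => rpow_nonneg ha _)
    (hf.memLp_rpow_of_nonneg hf0 hθ') (hg.memLp_rpow_of_nonneg hg0 hθ0)
  have rpow_cancel {h : α → ℝ} (hh0 : 0 ≤ᵐ[μ] h) {c : ℝ} (hc : 0 < c) :
      ∫ a, (h a ^ c) ^ (1 / c) ∂μ = ∫ a, h a ∂μ := by
    refine integral_congr_ae ?_
    filter_upwards [hh0] with a ha
    rw [one_div, rpow_rpow_inv ha hc.ne']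
  rwa [rpow_cancel hf0 hθ', rpow_cancel hg0 hθ0, one_div_one_div, one_div_one_div] at holder

end Interpolation

theorem intervalIntegral.integral_eq_setIntegral_Ioo {a b : ℝ} (f : ℝ → ℝ) (hab : a ≤ b) :
    ∫ x in a..b, f x = ∫ x in Ioo a b, f x := by
  rw [intervalIntegral.integral_of_le hab, integral_Ioc_eq_integral_Ioo]

structure IsDaughterDistribution (b : ℝ → ℝ → ℝ) : Prop where
  measurable : Measurable (Function.uncurry b)
  nonneg : ∀ x y : ℝ, 0 < x → x < y → 0 ≤ b x y
  integral_mul_eq : ∀ y : ℝ, 0 < y → ∫ x in (0:ℝ)..y, x * b x y = y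

noncomputable def normalizedMoment (b : ℝ → ℝ → ℝ) (m y : ℝ) : ℝ :=
  (∫ x in (0:ℝ)..y, x ^ m * b x y) / y ^ m

noncomputable def momentDeficit (b : ℝ → ℝ → ℝ) (m : ℝ) : ℝ :=
  ⨅ y : Ioi (0:ℝ), (1 - normalizedMoment b m y)

namespace IsDaughterDistribution

variable {b : ℝ → ℝ → ℝ} {m m' y : ℝ}

theorem setIntegral_Ioo_mul (hb : IsDaughterDistribution b) (hy : 0 < y) :
    ∫ x in Ioo 0 y, x * b x y = y := by
  rw [← intervalIntegral.integral_eq_setIntegral_Ioo _ hy.le, hb.integral_mul_eq y hy]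

theorem integrableOn_mul (hb : IsDaughterDistribution b) (hy : 0 < y) :
    IntegrableOn (fun x => x * b x y) (Ioo 0 y) := by
  by_contra h
  exact hy.ne (integral_undef h ▸ hb.setIntegral_Ioo_mul hy)

theorem rpow_mul_nonneg (hb : IsDaughterDistribution b) (m : ℝ) {x : ℝ} (hx : x ∈ Ioo 0 y) :
    0 ≤ x ^ m * b x y :=
  mul_nonneg (rpow_nonneg hx.1.le m) (hb.nonneg x y hx.1 hx.2)

theorem ae_rpow_mul_nonneg (hb : IsDaughterDistribution b) (m : ℝ) :
    0 ≤ᵐ[volume.restrict (Ioo 0 y)] fun x => x ^ m * b x y := by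
  filter_upwards [ae_restrict_mem measurableSet_Ioo] with x hx
  exact hb.rpow_mul_nonneg m hx

theorem rpow_mul_le (hb : IsDaughterDistribution b) (hmm' : m ≤ m') {x : ℝ} (hx : x ∈ Ioo 0 y) :
    x ^ m' * b x y ≤ y ^ (m' - m) * (x ^ m * b x y) := by
  have hpow : x ^ (m' - m) ≤ y ^ (m' - m) := rpow_le_rpow hx.1.le hx.2.le (sub_nonneg.mpr hmm')
  calc x ^ m' * b x y = x ^ (m' - m) * (x ^ m * b x y) := by
        rw [← mul_assoc, ← rpow_add hx.1, sub_add_cancel]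
    _ ≤ y ^ (m' - m) * (x ^ m * b x y) :=
        mul_le_mul_of_nonneg_right hpow (hb.rpow_mul_nonneg m hx)

theorem integrableOn_rpow_mul (hb : IsDaughterDistribution b) (hm : 1 ≤ m) (hy : 0 < y) :
    IntegrableOn (fun x => x ^ m * b x y) (Ioo 0 y) := by
  have hmeas : Measurable fun x => x ^ m * b x y :=
    (measurable_id.pow_const m).mul (hb.measurable.comp (measurable_id.prodMk measurable_const))
  refine ((hb.integrableOn_mul hy).const_mul (y ^ (m - 1))).mono' hmeas.aestronglyMeasurable ?_
  filter_upwards [ae_restrict_mem measurableSet_Ioo] with x hx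
  rw [Real.norm_of_nonneg (hb.rpow_mul_nonneg m hx)]
  simpa only [rpow_one] using hb.rpow_mul_le hm hx

theorem setIntegral_rpow_mul_le (hb : IsDaughterDistribution b) (hm : 1 ≤ m) (hmm' : m ≤ m')
    (hy : 0 < y) :
    ∫ x in Ioo 0 y, x ^ m' * b x y ≤ y ^ (m' - m) * ∫ x in Ioo 0 y, x ^ m * b x y := by
  rw [← integral_const_mul]
  exact setIntegral_mono_on (hb.integrableOn_rpow_mul (hm.trans hmm') hy)
    ((hb.integrableOn_rpow_mul hm hy).const_mul _) measurableSet_Ioo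
    fun x hx => hb.rpow_mul_le hmm' hx

theorem setIntegral_rpow_mul_le_rpow (hb : IsDaughterDistribution b) (hm1 : 1 < m) (hm2 : m < 2)
    (hy : 0 < y) :
    ∫ x in Ioo 0 y, x ^ m * b x y ≤
      y ^ (2 - m) * (∫ x in Ioo 0 y, x ^ (2:ℝ) * b x y) ^ (m - 1) := by
  have holder := integral_rpow_mul_rpow_le (hb.integrableOn_mul hy)
    (hb.integrableOn_rpow_mul one_le_two hy)
    (by simpa only [rpow_one] using hb.ae_rpow_mul_nonneg 1)
    (hb.ae_rpow_mul_nonneg 2) (sub_pos.mpr hm1) (by linarith)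
  rw [hb.setIntegral_Ioo_mul hy, (by ring : 1 - (m - 1) = 2 - m)] at holder
  refine le_of_eq_of_le (setIntegral_congr_fun measurableSet_Ioo fun x hx => ?_) holder
  have hb0 := hb.nonneg x y hx.1 hx.2
  rw [mul_rpow hx.1.le hb0, mul_rpow (rpow_nonneg hx.1.le 2) hb0, ← rpow_mul hx.1.le]
  calc x ^ m * b x y
      = x ^ (2 - m) * x ^ (2 * (m - 1)) * (b x y ^ (2 - m) * b x y ^ (m - 1)) := by
        rw [← rpow_add hx.1, ← rpow_add' hb0 (by norm_num)]
        ring_nf; rw [rpow_one]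
    _ = _ := by ring

theorem normalizedMoment_nonneg (hb : IsDaughterDistribution b) (m : ℝ) (hy : 0 ≤ y) :
    0 ≤ normalizedMoment b m y := by
  rw [normalizedMoment, intervalIntegral.integral_eq_setIntegral_Ioo _ hy]
  exact div_nonneg (setIntegral_nonneg measurableSet_Ioo fun x hx => hb.rpow_mul_nonneg m hx)
    (rpow_nonneg hy m)

theorem normalizedMoment_one (hb : IsDaughterDistribution b) (hy : 0 < y) :
    normalizedMoment b 1 y = 1 := by
  simp only [normalizedMoment, rpow_one, hb.integral_mul_eq y hy, div_self hy.ne']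

theorem normalizedMoment_antitone (hb : IsDaughterDistribution b) (hm : 1 ≤ m) (hmm' : m ≤ m')
    (hy : 0 < y) : normalizedMoment b m' y ≤ normalizedMoment b m y := by
  simp only [normalizedMoment, intervalIntegral.integral_eq_setIntegral_Ioo _ hy.le]
  rw [div_le_div_iff₀ (rpow_pos_of_pos hy m') (rpow_pos_of_pos hy m)]
  calc (∫ x in Ioo 0 y, x ^ m' * b x y) * y ^ m
      ≤ y ^ (m' - m) * (∫ x in Ioo 0 y, x ^ m * b x y) * y ^ m :=
        mul_le_mul_of_nonneg_right (hb.setIntegral_rpow_mul_le hm hmm' hy) (rpow_nonneg hy.le m)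
    _ = (∫ x in Ioo 0 y, x ^ m * b x y) * y ^ m' := by
        rw [mul_comm (y ^ (m' - m)), mul_assoc, ← rpow_add hy, sub_add_cancel]

theorem normalizedMoment_le_one (hb : IsDaughterDistribution b) (hm : 1 ≤ m) (hy : 0 < y) :
    normalizedMoment b m y ≤ 1 :=
  hb.normalizedMoment_one hy ▸ hb.normalizedMoment_antitone le_rfl hm hy

theorem normalizedMoment_le_rpow (hb : IsDaughterDistribution b) (hm1 : 1 < m) (hm2 : m < 2)
    (hy : 0 < y) : normalizedMoment b m y ≤ normalizedMoment b 2 y ^ (m - 1) := by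
  simp only [normalizedMoment, intervalIntegral.integral_eq_setIntegral_Ioo _ hy.le]
  set I₂ := ∫ x in Ioo 0 y, x ^ (2:ℝ) * b x y
  have hI₂ : 0 ≤ I₂ := setIntegral_nonneg measurableSet_Ioo fun x hx => hb.rpow_mul_nonneg 2 hx
  rw [div_rpow hI₂ (rpow_nonneg hy.le 2), ← rpow_mul hy.le, div_le_div_iff₀ (rpow_pos_of_pos hy m)
    (rpow_pos_of_pos hy _)]
  calc (∫ x in Ioo 0 y, x ^ m * b x y) * y ^ (2 * (m - 1))
      ≤ y ^ (2 - m) * I₂ ^ (m - 1) * y ^ (2 * (m - 1)) :=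
        mul_le_mul_of_nonneg_right (hb.setIntegral_rpow_mul_le_rpow hm1 hm2 hy)
          (rpow_nonneg hy.le _)
    _ = I₂ ^ (m - 1) * y ^ m := by
        rw [mul_right_comm, mul_comm _ (I₂ ^ _), ← rpow_add hy]
        ring_nf

theorem bddBelow_one_sub_normalizedMoment (hb : IsDaughterDistribution b) (hm : 1 ≤ m) :
    BddBelow (range fun y : Ioi (0:ℝ) => 1 - normalizedMoment b m y) :=
  ⟨0, by rintro _ ⟨y, rfl⟩; exact sub_nonneg.mpr (hb.normalizedMoment_le_one hm y.2)⟩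

theorem momentDeficit_le (hb : IsDaughterDistribution b) (hm : 1 ≤ m) (y : Ioi (0:ℝ)) :
    momentDeficit b m ≤ 1 - normalizedMoment b m y :=
  ciInf_le (hb.bddBelow_one_sub_normalizedMoment hm) y

theorem momentDeficit_le_one (hb : IsDaughterDistribution b) (hm : 1 ≤ m) :
    momentDeficit b m ≤ 1 :=
  (hb.momentDeficit_le hm ⟨1, mem_Ioi.mpr one_pos⟩).trans
    (sub_le_self 1 (hb.normalizedMoment_nonneg m zero_le_one))

theorem momentDeficit_mono (hb : IsDaughterDistribution b) (hm : 1 ≤ m) (hmm' : m ≤ m') :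
    momentDeficit b m ≤ momentDeficit b m' :=
  ciInf_mono (hb.bddBelow_one_sub_normalizedMoment hm) fun y =>
    sub_le_sub_left (hb.normalizedMoment_antitone hm hmm' y.2) 1

theorem one_sub_momentDeficit_le_rpow (hb : IsDaughterDistribution b) (hm1 : 1 < m)
    (hm2 : m < 2) : 1 - momentDeficit b m ≤ (1 - momentDeficit b 2) ^ (m - 1) := by
  rw [sub_le_comm]
  refine le_ciInf fun y => sub_le_sub_left ?_ 1
  calc normalizedMoment b m y ≤ normalizedMoment b 2 y ^ (m - 1) :=
        hb.normalizedMoment_le_rpow hm1 hm2 y.2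
    _ ≤ (1 - momentDeficit b 2) ^ (m - 1) :=
        rpow_le_rpow (hb.normalizedMoment_nonneg 2 y.2.le)
          (le_sub_comm.mp (hb.momentDeficit_le one_le_two y)) (by linarith)

theorem momentDeficit_pos (hb : IsDaughterDistribution b) (h2 : 0 < momentDeficit b 2)
    (hm : 1 < m) : 0 < momentDeficit b m := by
  rcases le_or_gt 2 m with h2m | hm2
  · exact h2.trans_le (hb.momentDeficit_mono one_le_two h2m)
  · have hlt : (1 - momentDeficit b 2) ^ (m - 1) < 1 :=
      rpow_lt_one (sub_nonneg.mpr (hb.momentDeficit_le_one one_le_two)) (by linarith)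
        (by linarith)
    linarith [hb.one_sub_momentDeficit_le_rpow hm hm2]

end IsDaughterDistribution

theorem stmt3 (b : ℝ → ℝ → ℝ) (δ : ℝ → ℝ)
    (hb_meas : Measurable (Function.uncurry b))
    (hb_nonneg : ∀ x y : ℝ, 0 < x → x < y → 0 ≤ b x y)
    (hb_mass : ∀ y : ℝ, 0 < y → ∫ x in (0:ℝ)..y, x * b x y = y)
    (hδ : ∀ m : ℝ, δ m = ⨅ y : Ioi (0:ℝ),
        (1 - (∫ x in (0:ℝ)..(y:ℝ), x ^ m * b x (y:ℝ)) / (y:ℝ) ^ m))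
    (hδ2 : 0 < δ 2) :
    (∀ m m' : ℝ, 1 < m → m ≤ m' → δ m ≤ δ m') ∧
    (∀ m : ℝ, 1 < m → 0 < δ m ∧ δ m ≤ 1) ∧
    (∀ m : ℝ, 1 < m → m < 2 → 1 - δ m ≤ (1 - δ 2) ^ (m - 1)) ∧
    (∀ m : ℝ, 2 ≤ m → 1 - δ m ≤ 1 - δ 2) := by
  obtain rfl : δ = momentDeficit b := funext hδ
  have hb : IsDaughterDistribution b := ⟨hb_meas, hb_nonneg, hb_mass⟩
  exact ⟨fun m m' hm => hb.momentDeficit_mono hm.le,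
    fun m hm => ⟨hb.momentDeficit_pos hδ2 hm, hb.momentDeficit_le_one hm.le⟩,
    fun m hm1 hm2 => hb.one_sub_momentDeficit_le_rpow hm1 hm2,
    fun m hm => sub_le_sub_left (hb.momentDeficit_mono one_le_two hm) 1⟩
end

section
/- Let a* > 0, γ ≥ 0, α = (γ+2)/2, and η = √(a*)/α. Define σ(x) = C x^{-γ/4} e^{-η x^α} for x > 0 with C > 0. Then for every x > 0, -σ''(x) + a* x^γ σ(x) = -C γ(γ+4)/16 · x^{-(γ+8)/4} e^{-η x^α} ≤ 0, i.e. σ is a subsolution of -u'' + a* x^γ u = 0 on (0,∞). -/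
/-!
The Liouville–Green exponent `q = (1 - α) / 2` kills the `y^(q+α-2)` term in the second derivative
of `c y^q e^{-η y^α}`, and `(ηα)^2 y^(2α-2)` is exactly the potential `a* y^γ`. Only
`-c q(q-1) y^(q-2) e^{-η y^α}` survives, which for `q = -γ/4` is `≤ 0`.
-/

open Real

lemma hasDerivAt_rpow_mul_exp_neg_mul_rpow (η α q : ℝ) {x : ℝ} (hx : 0 < x) :
    HasDerivAt (fun y => y ^ q * exp (-η * y ^ α))
      (q * (x ^ (q - 1) * exp (-η * x ^ α)) - η * α * (x ^ (q + α - 1) * exp (-η * x ^ α))) x := by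
  have hpow : HasDerivAt (fun y => y ^ q) (q * x ^ (q - 1)) x :=
    hasDerivAt_rpow_const (Or.inl hx.ne')
  have hexp : HasDerivAt (fun y => -η * y ^ α) (-η * (α * x ^ (α - 1))) x :=
    (hasDerivAt_rpow_const (Or.inl hx.ne')).const_mul _
  refine (hpow.mul hexp.exp).congr_deriv ?_
  rw [show q + α - 1 = q + (α - 1) by ring, rpow_add hx]
  ring

lemma deriv_deriv_rpow_mul_exp_neg_mul_rpow (c η α q : ℝ) {x : ℝ} (hx : 0 < x) :
    deriv (deriv fun y => c * y ^ q * exp (-η * y ^ α)) x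
      = c * (q * (q - 1) * x ^ (q - 2) - η * α * (2 * q + α - 1) * x ^ (q + α - 2)
          + (η * α) ^ 2 * x ^ (q + 2 * α - 2)) * exp (-η * x ^ α) := by
  have hfirst : deriv (fun y => c * y ^ q * exp (-η * y ^ α)) =ᶠ[nhds x] fun y =>
      c * (q * (y ^ (q - 1) * exp (-η * y ^ α)) - η * α * (y ^ (q + α - 1) * exp (-η * y ^ α))) := by
    filter_upwards [eventually_gt_nhds hx] with y hy
    simp_rw [mul_assoc c]
    exact ((hasDerivAt_rpow_mul_exp_neg_mul_rpow η α q hy).const_mul c).deriv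
  rw [hfirst.deriv_eq]
  refine ((((hasDerivAt_rpow_mul_exp_neg_mul_rpow η α (q - 1) hx).const_mul q).sub
    ((hasDerivAt_rpow_mul_exp_neg_mul_rpow η α (q + α - 1) hx).const_mul (η * α))).const_mul c
    |>.deriv).trans ?_
  rw [show q - 1 - 1 = q - 2 by ring, show q - 1 + α - 1 = q + α - 2 by ring,
    show q + α - 1 - 1 = q + α - 2 by ring, show q + α - 1 + α - 1 = q + 2 * α - 2 by ring]
  ring

lemma neg_deriv_deriv_add_mul_rpow_mul_exp_neg_mul_rpow (c η α q : ℝ) (hq : 2 * q + α - 1 = 0)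
    {x : ℝ} (hx : 0 < x) :
    -deriv (deriv fun y => c * y ^ q * exp (-η * y ^ α)) x
        + (η * α) ^ 2 * x ^ (2 * α - 2) * (c * x ^ q * exp (-η * x ^ α))
      = -(c * q * (q - 1)) * x ^ (q - 2) * exp (-η * x ^ α) := by
  rw [deriv_deriv_rpow_mul_exp_neg_mul_rpow c η α q hx, hq,
    show q + 2 * α - 2 = 2 * α - 2 + q by ring, rpow_add hx]
  ring

theorem stmt4 (astar γ C : ℝ) (ha : 0 < astar) (hγ : 0 ≤ γ) (hC : 0 < C)
    (α η : ℝ) (hα : α = (γ + 2) / 2) (hη : η = Real.sqrt astar / α)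
    (σ : ℝ → ℝ) (hσ : σ = fun x => C * x ^ (-γ / 4) * Real.exp (-η * x ^ α)) :
    ∀ x : ℝ, 0 < x →
      -(deriv (deriv σ) x) + astar * x ^ γ * σ x
        = -(C * γ * (γ + 4) / 16) * x ^ (-(γ + 8) / 4) * Real.exp (-η * x ^ α) ∧
      -(deriv (deriv σ) x) + astar * x ^ γ * σ x ≤ 0 := by
  intro x hx
  have hηα : (η * α) ^ 2 = astar := by
    rw [hη, div_mul_cancel₀ _ (by rw [hα]; positivity), sq_sqrt ha.le]
  have hpot : x ^ (2 * α - 2) = x ^ γ := by rw [hα]; ring_nf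
  have hσ_eq : -(deriv (deriv σ) x) + astar * x ^ γ * σ x
      = -(C * γ * (γ + 4) / 16) * x ^ (-(γ + 8) / 4) * exp (-η * x ^ α) := by
    subst hσ
    rw [← hηα, ← hpot, neg_deriv_deriv_add_mul_rpow_mul_exp_neg_mul_rpow C η α (-γ / 4)
      (by rw [hα]; ring) hx, show -γ / 4 - 2 = -(γ + 8) / 4 by ring]
    ring
  refine ⟨hσ_eq, hσ_eq.trans_le ?_⟩
  have : 0 ≤ C * γ * (γ + 4) / 16 * x ^ (-(γ + 8) / 4) * exp (-η * x ^ α) := by positivity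
  linarith
end

section
/- Let θ ∈ (0,1) and h(z) = θ (1 - ln z)^{-θ-1} z^{-2} on (0,1). Then ∫₀¹ z |ln z| h(z) dz = ∞, i.e. the logarithmic moment of h diverges. -/
/-!
Substituting `z = exp (-u)` turns the logarithmic moment into `∫₀^∞ θ u (1 + u)^(-θ-1) du`.
For `u ≥ 1` the integrand is at least `θ 2^(-θ-1) u^(-θ)`, which is not integrable at infinity
because `θ < 1`.
-/

open Real Set MeasureTheory

theorem lintegral_Ioo_zero_one_eq_lintegral_exp_neg (g : ℝ → ENNReal) :
    ∫⁻ z in Ioo 0 1, g z = ∫⁻ u in Ioi 0, ENNReal.ofReal (exp (-u)) * g (exp (-u)) := by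
  have himage : (fun u => exp (-u)) '' Ioi 0 = Ioo 0 1 := by
    rw [show (fun u => exp (-u)) = exp ∘ Neg.neg from rfl, image_comp, image_neg_Ioi, neg_zero,
      image_exp_Iio, exp_zero]
  have hderiv : ∀ u ∈ Ioi (0 : ℝ), HasDerivWithinAt (fun u => exp (-u)) (-exp (-u)) (Ioi 0) u :=
    fun u _ => by simpa using ((hasDerivAt_neg u).exp).hasDerivWithinAt
  have hanti : AntitoneOn (fun u => exp (-u)) (Ioi 0) :=
    fun _ _ _ _ hab => exp_le_exp.2 (neg_le_neg hab)
  rw [← himage, lintegral_image_eq_lintegral_deriv_mul_of_antitoneOn measurableSet_Ioi hderiv hanti]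
  simp only [neg_neg]

theorem lintegral_Ioi_rpow_eq_top {a s : ℝ} (ha : 0 < a) (hs : -1 ≤ s) :
    ∫⁻ u in Ioi a, ENNReal.ofReal (u ^ s) = ⊤ := by
  by_contra hfin
  have hnonneg : 0 ≤ᵐ[volume.restrict (Ioi a)] fun u : ℝ => u ^ s := by
    filter_upwards [ae_restrict_mem measurableSet_Ioi] with u hu
    exact rpow_nonneg (ha.trans hu).le _
  have hint : IntegrableOn (fun u : ℝ => u ^ s) (Ioi a) :=
    (lintegral_ofReal_ne_top_iff_integrable (by fun_prop) hnonneg).1 hfin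
  linarith [(integrableOn_Ioi_rpow_iff ha).1 hint]

theorem two_rpow_mul_rpow_add_one_le {s u : ℝ} (hs : s ≤ 0) (hu : 1 ≤ u) :
    2 ^ s * u ^ (s + 1) ≤ u * (1 + u) ^ s := by
  have hu0 : 0 < u := one_pos.trans_le hu
  calc 2 ^ s * u ^ (s + 1) = u * (2 * u) ^ s := by
        rw [mul_rpow zero_le_two hu0.le, rpow_add_one hu0.ne']; ring
    _ ≤ u * (1 + u) ^ s := by
        gcongr ?_ * ?_
        exact rpow_le_rpow_of_nonpos (by positivity) (by linarith) hs

theorem exp_neg_mul_logMoment_eq {θ u : ℝ} (hu : 0 < u) :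
    exp (-u) * (exp (-u) * |log (exp (-u))| *
      (θ * (1 - log (exp (-u))) ^ (-θ - 1) * exp (-u) ^ (-2 : ℝ))) =
      θ * (u * (1 + u) ^ (-θ - 1)) := by
  have hexp : exp (-u) * exp (-u) * exp (-u * -2) = 1 := by
    rw [← exp_add, ← exp_add, ← exp_zero]; ring_nf
  rw [log_exp, abs_neg, abs_of_pos hu, sub_neg_eq_add, ← exp_mul]
  linear_combination θ * (u * (1 + u) ^ (-θ - 1)) * hexp

theorem stmt7 (θ : ℝ) (hθ : 0 < θ) (hθ' : θ < 1)
    (h : ℝ → ℝ) (hh : ∀ z : ℝ, 0 < z → h z = θ * (1 - Real.log z) ^ (-θ - 1) * z ^ (-2 : ℝ)) :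
    ∫⁻ z in Ioo (0:ℝ) 1, ENNReal.ofReal (z * |Real.log z| * h z) = ⊤ := by
  have hsubst : ∀ u ∈ Ioi (0 : ℝ), ENNReal.ofReal (exp (-u)) *
      ENNReal.ofReal (exp (-u) * |log (exp (-u))| * h (exp (-u))) =
      ENNReal.ofReal (θ * (u * (1 + u) ^ (-θ - 1))) := fun u hu => by
    rw [← ENNReal.ofReal_mul (exp_pos _).le, hh _ (exp_pos _), exp_neg_mul_logMoment_eq hu]
  have hlower : ∀ u ∈ Ioi (1 : ℝ), ENNReal.ofReal (θ * 2 ^ (-θ - 1)) * ENNReal.ofReal (u ^ (-θ)) ≤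
      ENNReal.ofReal (θ * (u * (1 + u) ^ (-θ - 1))) := fun u hu => by
    rw [← ENNReal.ofReal_mul (by positivity), mul_assoc]
    have := two_rpow_mul_rpow_add_one_le (s := -θ - 1) (by linarith) (le_of_lt hu)
    rw [sub_add_cancel] at this
    gcongr
  have hc : ENNReal.ofReal (θ * 2 ^ (-θ - 1)) ≠ 0 := (ENNReal.ofReal_pos.2 (by positivity)).ne'
  rw [lintegral_Ioo_zero_one_eq_lintegral_exp_neg, eq_top_iff]
  calc ⊤ = ENNReal.ofReal (θ * 2 ^ (-θ - 1)) * ∫⁻ u in Ioi 1, ENNReal.ofReal (u ^ (-θ)) := by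
        rw [lintegral_Ioi_rpow_eq_top one_pos (by linarith), ENNReal.mul_top hc]
    _ = ∫⁻ u in Ioi 1, ENNReal.ofReal (θ * 2 ^ (-θ - 1)) * ENNReal.ofReal (u ^ (-θ)) :=
        (lintegral_const_mul' _ _ ENNReal.ofReal_ne_top).symm
    _ ≤ ∫⁻ u in Ioi 1, ENNReal.ofReal (θ * (u * (1 + u) ^ (-θ - 1))) :=
        setLIntegral_mono' measurableSet_Ioi hlower
    _ ≤ ∫⁻ u in Ioi 0, ENNReal.ofReal (θ * (u * (1 + u) ^ (-θ - 1))) :=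
        lintegral_mono_set (Ioi_subset_Ioi zero_le_one)
    _ = _ := (setLIntegral_congr_fun measurableSet_Ioi hsubst).symm
end

section
/- Let θ ∈ (0,1). Then ∫_z^1 (1 - ln y)^{-θ} y^{-2} dy ∼ z^{-1} (1 - ln z)^{-θ} as z → 0⁺, i.e. the ratio of the two sides tends to 1. -/
/-!
The weight `w y = (1 - log y) ^ (-θ)` is increasing on `(0, 1]` and slowly varying at `0`.
Bounding `w` below by `w z` gives `∫_z^1 w y y⁻² dy ≥ w z (z⁻¹ - 1)`. For the upper bound, split
at `a = z P ^ (θ + 1)` with `P = 1 - log z`: on `[z, a]` we have `w ≤ w a`, and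
`1 - log a = P - (θ + 1) log P ∼ P`; on `[a, 1]` we have `w ≤ 1`, so that piece is at most
`a⁻¹ = z⁻¹ w z / P`.
-/

open Real Set Filter Topology

lemma integral_const_mul_rpow_neg_two (c : ℝ) {p q : ℝ} (hp : 0 < p) (hpq : p ≤ q) :
    ∫ y in p..q, c * y ^ (-2 : ℝ) = c * (p⁻¹ - q⁻¹) := by
  have h0 : (0 : ℝ) ∉ uIcc p q := by
    rw [uIcc_of_le hpq]
    exact fun h => hp.not_ge h.1
  rw [intervalIntegral.integral_const_mul, integral_rpow (Or.inr ⟨by norm_num, h0⟩),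
    show (-2 : ℝ) + 1 = -1 by norm_num, rpow_neg_one, rpow_neg_one]
  ring

lemma continuousOn_rpow_neg_two {p q : ℝ} (hp : 0 < p) (hpq : p ≤ q) :
    ContinuousOn (fun y : ℝ => y ^ (-2 : ℝ)) (uIcc p q) := by
  refine continuousOn_id.rpow_const fun y hy => Or.inl ?_
  rw [uIcc_of_le hpq] at hy
  exact (hp.trans_le hy.1).ne'

section MonotoneWeight

variable {f : ℝ → ℝ} {p q : ℝ}

lemma MonotoneOn.intervalIntegrable_mul_rpow_neg_two (hf : MonotoneOn f (Icc p q))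
    (hp : 0 < p) (hpq : p ≤ q) :
    IntervalIntegrable (fun y => f y * y ^ (-2 : ℝ)) MeasureTheory.volume p q :=
  (MonotoneOn.intervalIntegrable (by rwa [uIcc_of_le hpq])).mul_continuousOn
    (continuousOn_rpow_neg_two hp hpq)

lemma integral_mul_rpow_neg_two_le (hf : MonotoneOn f (Icc p q)) (hp : 0 < p) (hpq : p ≤ q) :
    ∫ y in p..q, f y * y ^ (-2 : ℝ) ≤ f q * (p⁻¹ - q⁻¹) := by
  rw [← integral_const_mul_rpow_neg_two _ hp hpq]
  refine intervalIntegral.integral_mono_on hpq (hf.intervalIntegrable_mul_rpow_neg_two hp hpq)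
    ((continuousOn_const.mul (continuousOn_rpow_neg_two hp hpq)).intervalIntegrable) ?_
  intro y hy
  gcongr
  · exact rpow_nonneg (hp.trans_le hy.1).le _
  · exact hf hy ⟨hpq, le_rfl⟩ hy.2

lemma le_integral_mul_rpow_neg_two (hf : MonotoneOn f (Icc p q)) (hp : 0 < p) (hpq : p ≤ q) :
    f p * (p⁻¹ - q⁻¹) ≤ ∫ y in p..q, f y * y ^ (-2 : ℝ) := by
  rw [← integral_const_mul_rpow_neg_two _ hp hpq]
  refine intervalIntegral.integral_mono_on hpq
    ((continuousOn_const.mul (continuousOn_rpow_neg_two hp hpq)).intervalIntegrable)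
    (hf.intervalIntegrable_mul_rpow_neg_two hp hpq) ?_
  intro y hy
  gcongr
  · exact rpow_nonneg (hp.trans_le hy.1).le _
  · exact hf ⟨le_rfl, hpq⟩ hy hy.1

end MonotoneWeight

lemma monotoneOn_one_sub_log_rpow_neg {θ : ℝ} (hθ : 0 ≤ θ) :
    MonotoneOn (fun y => (1 - log y) ^ (-θ)) (Ioc 0 1) := by
  intro x hx y hy hxy
  have hy' : 0 < 1 - log y := by linarith [log_nonpos hy.1.le hy.2]
  have hlog : log x ≤ log y := log_le_log hx.1 hxy
  exact rpow_le_rpow_of_nonpos hy' (by linarith) (neg_nonpos.mpr hθ)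

section Bounds

variable {θ z : ℝ}

lemma le_integral_one_sub_log_rpow_neg (hθ : 0 ≤ θ) (hz0 : 0 < z) (hz1 : z ≤ 1) :
    (1 - z) * (z⁻¹ * (1 - log z) ^ (-θ)) ≤ ∫ y in z..1, (1 - log y) ^ (-θ) * y ^ (-2 : ℝ) := by
  calc (1 - z) * (z⁻¹ * (1 - log z) ^ (-θ)) = (1 - log z) ^ (-θ) * (z⁻¹ - 1⁻¹) := by
        field_simp
    _ ≤ _ := le_integral_mul_rpow_neg_two
        ((monotoneOn_one_sub_log_rpow_neg hθ).mono fun y hy => ⟨hz0.trans_le hy.1, hy.2⟩) hz0 hz1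

lemma integral_one_sub_log_rpow_neg_le {a : ℝ} (hθ : 0 ≤ θ) (hz0 : 0 < z) (hza : z ≤ a) (ha1 : a ≤ 1) :
    ∫ y in z..1, (1 - log y) ^ (-θ) * y ^ (-2 : ℝ) ≤ (1 - log a) ^ (-θ) * z⁻¹ + a⁻¹ := by
  have ha0 : 0 < a := hz0.trans_le hza
  have hmono {p q : ℝ} (hp : 0 < p) (hq : q ≤ 1) :
      MonotoneOn (fun y => (1 - log y) ^ (-θ)) (Icc p q) :=
    (monotoneOn_one_sub_log_rpow_neg hθ).mono fun y hy => ⟨hp.trans_le hy.1, hy.2.trans hq⟩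
  have hlow := integral_mul_rpow_neg_two_le (hmono hz0 ha1) hz0 hza
  have hhigh := integral_mul_rpow_neg_two_le (hmono ha0 le_rfl) ha0 ha1
  rw [← intervalIntegral.integral_add_adjacent_intervals
    ((hmono hz0 ha1).intervalIntegrable_mul_rpow_neg_two hz0 hza)
    ((hmono ha0 le_rfl).intervalIntegrable_mul_rpow_neg_two ha0 ha1)]
  have hwa : 0 ≤ (1 - log a) ^ (-θ) := rpow_nonneg (by linarith [log_nonpos ha0.le ha1]) _
  have : 0 < a⁻¹ := inv_pos.mpr ha0
  simp only [log_one, sub_zero, one_rpow, inv_one] at hhigh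
  nlinarith

lemma integral_one_sub_log_rpow_neg_div_le (hθ : 0 ≤ θ) (hz0 : 0 < z) (hz1 : z < 1)
    (ha1 : z * (1 - log z) ^ (θ + 1) ≤ 1) :
    (∫ y in z..1, (1 - log y) ^ (-θ) * y ^ (-2 : ℝ)) / (z⁻¹ * (1 - log z) ^ (-θ)) ≤
      ((1 - log z) / ((1 - log z) - (θ + 1) * log (1 - log z))) ^ θ + (1 - log z)⁻¹ := by
  set P := 1 - log z with hP
  have hP1 : 1 < P := by linarith [log_neg hz0 hz1]
  have hP0 : 0 < P := one_pos.trans hP1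
  have hza : z ≤ z * P ^ (θ + 1) := le_mul_of_one_le_right hz0.le (one_le_rpow hP1.le (by linarith))
  have hlog_a : 1 - log (z * P ^ (θ + 1)) = P - (θ + 1) * log P := by
    rw [log_mul hz0.ne' (rpow_pos_of_pos hP0 _).ne', log_rpow hP0]
    ring
  have hQ0 : 0 < P - (θ + 1) * log P := by
    rw [← hlog_a]
    linarith [log_nonpos (hz0.trans_le hza).le ha1]
  rw [div_le_iff₀ (by positivity)]
  refine (integral_one_sub_log_rpow_neg_le hθ hz0 hza ha1).trans_eq ?_
  rw [hlog_a, div_rpow hP0.le hQ0.le, rpow_neg hP0.le, rpow_neg hQ0.le, rpow_add hP0, rpow_one]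
  field_simp

end Bounds

lemma tendsto_one_sub_log_nhdsGT_zero : Tendsto (fun z => 1 - log z) (𝓝[>] 0) atTop :=
  tendsto_atTop_add_const_left _ 1 (tendsto_neg_atBot_atTop.comp tendsto_log_nhdsGT_zero)

lemma tendsto_mul_one_sub_log_rpow_nhdsGT_zero (k : ℝ) :
    Tendsto (fun z => z * (1 - log z) ^ k) (𝓝[>] 0) (𝓝 0) := by
  -- `z = e · exp (-(1 - log z))`
  have h := ((tendsto_rpow_mul_exp_neg_mul_atTop_nhds_zero k 1 one_pos).comp
    tendsto_one_sub_log_nhdsGT_zero).const_mul (exp 1)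
  rw [mul_zero] at h
  refine h.congr' (eventually_mem_nhdsWithin.mono fun z (hz : 0 < z) => ?_)
  simp only [Function.comp_apply, neg_mul, one_mul, neg_sub, exp_sub, exp_log hz]
  field_simp

lemma tendsto_div_sub_mul_log_atTop (c : ℝ) :
    Tendsto (fun x => x / (x - c * log x)) atTop (𝓝 1) := by
  have h : Tendsto (fun x => (1 - c * (log x / x))⁻¹) atTop (𝓝 1) := by
    simpa using ((isLittleO_log_id_atTop.tendsto_div_nhds_zero.const_mul c).const_sub 1).inv₀
      (by simp)
  refine h.congr' (eventually_gt_atTop 0 |>.mono fun x hx => ?_)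
  field_simp

theorem stmt9_general (θ : ℝ) (hθ : 0 < θ) :
    Tendsto (fun z : ℝ =>
        (∫ y in z..1, (1 - Real.log y) ^ (-θ) * y ^ (-2 : ℝ)) /
          (z⁻¹ * (1 - Real.log z) ^ (-θ)))
      (nhdsWithin 0 (Ioi 0)) (nhds 1) := by
  have hlower : Tendsto (fun z : ℝ => 1 - z) (𝓝[>] 0) (𝓝 1) := by
    exact ((continuous_const.sub continuous_id).tendsto' (0 : ℝ) 1 (sub_zero 1)).mono_left
      nhdsWithin_le_nhds
  have hupper : Tendsto (fun x => (x / (x - (θ + 1) * log x)) ^ θ + x⁻¹) atTop (𝓝 1) := by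
    simpa using ((tendsto_div_sub_mul_log_atTop (θ + 1)).rpow_const (Or.inr hθ.le)).add
      tendsto_inv_atTop_zero
  have hz : ∀ᶠ z in 𝓝[>] (0 : ℝ), z ∈ Ioo 0 1 := Ioo_mem_nhdsGT one_pos
  have hsplit : ∀ᶠ z in 𝓝[>] (0 : ℝ), z * (1 - log z) ^ (θ + 1) ≤ 1 :=
    (tendsto_mul_one_sub_log_rpow_nhdsGT_zero _).eventually (eventually_le_nhds one_pos)
  refine tendsto_of_tendsto_of_tendsto_of_le_of_le' hlower
    (hupper.comp tendsto_one_sub_log_nhdsGT_zero) ?_ ?_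
  · filter_upwards [hz] with z hz
    have hP0 : 0 < 1 - log z := by linarith [log_neg hz.1 hz.2]
    rw [le_div_iff₀ (mul_pos (inv_pos.mpr hz.1) (rpow_pos_of_pos hP0 _))]
    exact le_integral_one_sub_log_rpow_neg hθ.le hz.1 hz.2.le
  · filter_upwards [hz, hsplit] with z hz ha
    exact integral_one_sub_log_rpow_neg_div_le hθ.le hz.1 hz.2 ha

theorem stmt9 (θ : ℝ) (hθ : 0 < θ) (hθ' : θ < 1) :
    Tendsto (fun z : ℝ =>
        (∫ y in z..1, (1 - Real.log y) ^ (-θ) * y ^ (-2 : ℝ)) /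
          (z⁻¹ * (1 - Real.log z) ^ (-θ)))
      (nhdsWithin 0 (Ioi 0)) (nhds 1) :=
  stmt9_general θ hθ
end

section
/- Let μ, α, χ, ε > 0 with α ≥ 1 and ε = (2μ+1-α-χ)/4 > 0, and let m ≥ m₀ where m₀ ≥ 2 satisfies m₀ α ≥ μ + 1 + χ and max{χ(μ+α)/(m₀α-μ), μ(μ+1)/(m₀α)} ≤ ε. Then (mα-μ)(mα-μ-1)/(m(m-1)α²) ≤ 1 - (2μ+1-α-ε)/((m-1)α) for all m ≥ m₀. -/
/-!
Writing `x = m α`, both sides have the same leading part `x² - (2μ + 1) x` once multiplied by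
`m (m - 1) α²`, and their difference is `ε x - μ (μ + 1)`. So the inequality is equivalent to
`μ (μ + 1) ≤ ε m α`, which the hypothesis gives at `m₀` and which persists for `m ≥ m₀` since `ε ≥ 0`.
-/

lemma one_sub_div_sub_div_eq (μ α ε m : ℝ) (hα : α ≠ 0) (hm : m ≠ 0) (hm1 : m - 1 ≠ 0) :
    1 - (2 * μ + 1 - α - ε) / ((m - 1) * α)
        - (m * α - μ) * (m * α - μ - 1) / (m * (m - 1) * α ^ 2)
      = (ε * (m * α) - μ * (μ + 1)) / (m * (m - 1) * α ^ 2) := by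
  field_simp
  ring

lemma div_le_one_sub_div_of_mul_le (μ α ε m : ℝ) (hα : 0 < α) (hm : 1 < m)
    (h : μ * (μ + 1) ≤ ε * (m * α)) :
    (m * α - μ) * (m * α - μ - 1) / (m * (m - 1) * α ^ 2)
      ≤ 1 - (2 * μ + 1 - α - ε) / ((m - 1) * α) := by
  have hm0 : 0 < m := by linarith
  have hm1 : 0 < m - 1 := by linarith
  rw [← sub_nonneg, one_sub_div_sub_div_eq μ α ε m hα.ne' hm0.ne' hm1.ne']
  exact div_nonneg (sub_nonneg.mpr h) (by positivity)

theorem stmt16_general (μ α χ ε m₀ m : ℝ)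
    (hα : 1 ≤ α)
    (hε' : 0 < ε)
    (hm₀ : 2 ≤ m₀)
    (hm₀ε : max (χ * (μ + α) / (m₀ * α - μ)) (μ * (μ + 1) / (m₀ * α)) ≤ ε)
    (hm : m₀ ≤ m) :
    (m * α - μ) * (m * α - μ - 1) / (m * (m - 1) * α ^ 2)
      ≤ 1 - (2 * μ + 1 - α - ε) / ((m - 1) * α) := by
  have hα0 : 0 < α := by linarith
  have hm₀α : 0 < m₀ * α := by positivity
  have key : μ * (μ + 1) ≤ ε * (m * α) :=
    calc μ * (μ + 1) ≤ ε * (m₀ * α) := (div_le_iff₀ hm₀α).mp (le_max_right _ _ |>.trans hm₀ε)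
      _ ≤ ε * (m * α) := by gcongr
  exact div_le_one_sub_div_of_mul_le μ α ε m hα0 (by linarith) key

theorem stmt16 (μ α χ ε m₀ m : ℝ)
    (hμ : 0 < μ) (hα : 1 ≤ α) (hχ : 0 < χ)
    (hε : ε = (2 * μ + 1 - α - χ) / 4) (hε' : 0 < ε)
    (hm₀ : 2 ≤ m₀)
    (hm₀α : μ + 1 + χ ≤ m₀ * α)
    (hm₀ε : max (χ * (μ + α) / (m₀ * α - μ)) (μ * (μ + 1) / (m₀ * α)) ≤ ε)
    (hm : m₀ ≤ m) :
    (m * α - μ) * (m * α - μ - 1) / (m * (m - 1) * α ^ 2)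
      ≤ 1 - (2 * μ + 1 - α - ε) / ((m - 1) * α) :=
  stmt16_general μ α χ ε m₀ m hα hε' hm₀ hm₀ε hm
end
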